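/- arXiv:2601.05691 — 2 statements merged into one kernel-verified Lean document; each statement's English description precedes it below -/
import Mathlib

section
/- Assume the Beck–Chevalley property. Let (X, φ) be an object of Desc_p(f) and define β := (ε_{f₂})_X ∘ (f₂)_!(φ) : (f₂)_!(f₁^* X) ⟶ X. Then β satisfies the multiplicative action axiom (AC2): β ∘ μ'_X = β ∘ (f₂)_!(f₁^*(β)). -/
open CategoryTheory

universe v' u' v u

namespace BRPaper

variable (C : Type u) [Category.{v} C] (E : C → Type u') [∀ A, Category.{v'} (E A)]

/-- A cloven bifibration over `C`, modeled as a contravariant pseudofunctor `pull`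
(with coherence isomorphisms `ι`, `κ` satisfying the pseudofunctor axioms)
together with chosen left adjoints `push f ⊣ pull f`. -/
structure ClovenBifib where
  pull : ∀ {B A : C}, (B ⟶ A) → (E A ⥤ E B)
  ι : ∀ B : C, 𝟭 (E B) ≅ pull (𝟙 B)
  κ : ∀ {X Y Z : C} (f : Y ⟶ Z) (g : X ⟶ Y), pull f ⋙ pull g ≅ pull (g ≫ f)
  push : ∀ {B A : C}, (B ⟶ A) → (E B ⥤ E A)
  adj : ∀ {B A : C} (f : B ⟶ A), push f ⊣ pull f
  κ_id_left : ∀ {B A : C} (f : B ⟶ A),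
    CategoryTheory.Functor.whiskerLeft (pull f) (ι B).hom ≫ (κ f (𝟙 B)).hom =
      eqToHom (by rw [Category.id_comp, Functor.comp_id])
  κ_id_right : ∀ {B A : C} (g : B ⟶ A),
    CategoryTheory.Functor.whiskerRight (ι A).hom (pull g) ≫ (κ (𝟙 A) g).hom =
      eqToHom (by rw [Category.comp_id, Functor.id_comp])
  κ_assoc : ∀ {X Y Z W : C} (f : Z ⟶ W) (g : Y ⟶ Z) (h : X ⟶ Y),
    CategoryTheory.Functor.whiskerRight (κ f g).hom (pull h) ≫ (κ (g ≫ f) h).hom =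
      CategoryTheory.Functor.whiskerLeft (pull f) (κ g h).hom ≫ (κ f (h ≫ g)).hom ≫
        eqToHom (by rw [Category.assoc])

variable {C E}
variable (P : ClovenBifib C E)

namespace ClovenBifib

/-- The mate of a 2-cell `θ : g^* ∘ e^* ⟶ k^* ∘ h^*`. -/
def mate {A₀ B₀ C₀ D₀ : C} {e : B₀ ⟶ A₀} {g : C₀ ⟶ B₀} {k : C₀ ⟶ D₀} {h : D₀ ⟶ A₀}
    (θ : P.pull e ⋙ P.pull g ⟶ P.pull h ⋙ P.pull k) :
    P.pull g ⋙ P.push k ⟶ P.push e ⋙ P.pull h :=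
  Functor.whiskerRight (P.adj e).unit (P.pull g ⋙ P.push k) ≫
    Functor.whiskerRight (Functor.whiskerLeft (P.push e) θ) (P.push k) ≫
    Functor.whiskerLeft (P.push e ⋙ P.pull h) (P.adj k).counit

/-- The two-fold mate of a 2-cell `θ : g^* ∘ e^* ⟶ k^* ∘ h^*`. -/
def twoMate {A₀ B₀ C₀ D₀ : C} {e : B₀ ⟶ A₀} {g : C₀ ⟶ B₀} {k : C₀ ⟶ D₀} {h : D₀ ⟶ A₀}
    (θ : P.pull e ⋙ P.pull g ⟶ P.pull h ⋙ P.pull k) :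
    P.push k ⋙ P.push h ⟶ P.push g ⋙ P.push e :=
  Functor.whiskerRight (P.adj g).unit (P.push k ⋙ P.push h) ≫
    Functor.whiskerRight (Functor.whiskerLeft (P.push g) (P.mate θ)) (P.push h) ≫
    Functor.whiskerLeft (P.push g ⋙ P.push e) (P.adj h).counit

/-- The Beck–Chevalley transformation of a commutative square `a ≫ d = c ≫ b`. -/
def BC {A₀ B₀ C₀ D₀ : C} (a : A₀ ⟶ B₀) (c : A₀ ⟶ C₀) (d : B₀ ⟶ D₀) (b : C₀ ⟶ D₀)
    (sq : a ≫ d = c ≫ b) :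
    P.pull a ⋙ P.push c ⟶ P.push d ⋙ P.pull b :=
  P.mate ((P.κ d a).hom ≫ eqToHom (by rw [sq]) ≫ (P.κ b c).inv)

/-- The Beck–Chevalley property: the Beck–Chevalley transformation of every
pullback square is an isomorphism. -/
def BCCond : Prop :=
  ∀ ⦃A₀ B₀ C₀ D₀ : C⦄ (a : A₀ ⟶ B₀) (c : A₀ ⟶ C₀) (d : B₀ ⟶ D₀) (b : C₀ ⟶ D₀)
    (sq : a ≫ d = c ≫ b), IsPullback a c d b → IsIso (P.BC a c d b sq)

/-- The inverse (backward) Beck–Chevalley transformation. -/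
noncomputable def BCinv {A₀ B₀ C₀ D₀ : C} (a : A₀ ⟶ B₀) (c : A₀ ⟶ C₀) (d : B₀ ⟶ D₀)
    (b : C₀ ⟶ D₀) (sq : a ≫ d = c ≫ b) (hiso : IsIso (P.BC a c d b sq)) :
    P.push d ⋙ P.pull b ⟶ P.pull a ⋙ P.push c :=
  @CategoryTheory.inv _ _ _ _ (P.BC a c d b sq) hiso

variable {A B : C}

/-- The canonical isomorphism `χ₁ : f₁^* ∘ f^* ≅ f₂^* ∘ f^*` for the kernel pair of `f`. -/
def chi1 (f : B ⟶ A) {BAB : C} (f₁ f₂ : BAB ⟶ B) (hf : f₁ ≫ f = f₂ ≫ f) :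
    P.pull f ⋙ P.pull f₁ ≅ P.pull f ⋙ P.pull f₂ :=
  P.κ f f₁ ≪≫ eqToIso (by rw [hf]) ≪≫ (P.κ f f₂).symm

/-- The canonical isomorphism `d_i : Id ≅ Δ^* ∘ f_i^*`. -/
def dIso {BAB : C} (fi : BAB ⟶ B) (Δ : B ⟶ BAB) (hΔ : Δ ≫ fi = 𝟙 B) :
    𝟭 (E B) ≅ P.pull fi ⋙ P.pull Δ :=
  P.ι B ≪≫ eqToIso (by rw [hΔ]) ≪≫ (P.κ fi Δ).symm

/-- The canonical isomorphism `j_i : π^* ∘ f_i^* ≅ π'^* ∘ f_i^*`. -/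
def jIso {BAB Q : C} (fi : BAB ⟶ B) (π π' : Q ⟶ BAB) (hπ : π ≫ fi = π' ≫ fi) :
    P.pull fi ⋙ P.pull π ≅ P.pull fi ⋙ P.pull π' :=
  P.κ fi π ≪≫ eqToIso (by rw [hπ]) ≪≫ (P.κ fi π').symm

/-- The canonical isomorphism `j : π₂^* ∘ f₂^* ≅ π₁^* ∘ f₁^*`. -/
def jCross {BAB Q : C} (f₁ f₂ : BAB ⟶ B) (π₁ π₂ : Q ⟶ BAB) (hππ : π₂ ≫ f₂ = π₁ ≫ f₁) :
    P.pull f₂ ⋙ P.pull π₂ ≅ P.pull f₁ ⋙ P.pull π₁ :=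
  P.κ f₂ π₂ ≪≫ eqToIso (by rw [hππ]) ≪≫ (P.κ f₁ π₁).symm

/-- Multiplication of the monad `T_f = f^* ∘ f_!`. -/
def Tmul (f : B ⟶ A) (X : E B) :
    (P.pull f).obj ((P.push f).obj ((P.pull f).obj ((P.push f).obj X))) ⟶
      (P.pull f).obj ((P.push f).obj X) :=
  (P.pull f).map ((P.adj f).counit.app ((P.push f).obj X))

/-- `φ := f₂^*(α) ∘ (χ₁)_{f_! X} ∘ f₁^*((η_f)_X)`. -/
def phi (f : B ⟶ A) {BAB : C} (f₁ f₂ : BAB ⟶ B) (hf : f₁ ≫ f = f₂ ≫ f)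
    (X : E B) (α : (P.pull f).obj ((P.push f).obj X) ⟶ X) :
    (P.pull f₁).obj X ⟶ (P.pull f₂).obj X :=
  (P.pull f₁).map ((P.adj f).unit.app X) ≫
    (P.chi1 f f₁ f₂ hf).hom.app ((P.push f).obj X) ≫ (P.pull f₂).map α

/-- `ψ := f₁^*(α) ∘ (χ₁⁻¹)_{f_! X} ∘ f₂^*((η_f)_X)`. -/
def psi (f : B ⟶ A) {BAB : C} (f₁ f₂ : BAB ⟶ B) (hf : f₁ ≫ f = f₂ ≫ f)
    (X : E B) (α : (P.pull f).obj ((P.push f).obj X) ⟶ X) :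
    (P.pull f₂).obj X ⟶ (P.pull f₁).obj X :=
  (P.pull f₂).map ((P.adj f).unit.app X) ≫
    (P.chi1 f f₁ f₂ hf).inv.app ((P.push f).obj X) ≫ (P.pull f₁).map α

/-- `β := (ε_{f₂})_X ∘ (f₂)_!(φ)`. -/
def betaMap {BAB : C} (f₁ f₂ : BAB ⟶ B) (X : E B)
    (φ : (P.pull f₁).obj X ⟶ (P.pull f₂).obj X) :
    (P.push f₂).obj ((P.pull f₁).obj X) ⟶ X :=
  (P.push f₂).map φ ≫ (P.adj f₂).counit.app X

/-- The unit `η'` of the monad `(f₂)_! ∘ f₁^*`. -/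
def eta' {BAB : C} (f₁ f₂ : BAB ⟶ B) (Δ : B ⟶ BAB)
    (hΔ₁ : Δ ≫ f₁ = 𝟙 B) (hΔ₂ : Δ ≫ f₂ = 𝟙 B) (X : E B) :
    X ⟶ (P.push f₂).obj ((P.pull f₁).obj X) :=
  (P.dIso f₁ Δ hΔ₁).hom.app X ≫
    (P.pull Δ).map ((P.adj f₂).unit.app ((P.pull f₁).obj X)) ≫
    (P.dIso f₂ Δ hΔ₂).inv.app ((P.push f₂).obj ((P.pull f₁).obj X))

/-- `k₂ : (f₂)_! ∘ (π₁)_! ⟶ (f₂)_! ∘ π_!`, the two-fold mate of `j₂`. -/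
def kTwo {BAB Q : C} (f₂ : BAB ⟶ B) (π π₁ : Q ⟶ BAB) (hπ₂ : π ≫ f₂ = π₁ ≫ f₂) :
    P.push π₁ ⋙ P.push f₂ ⟶ P.push π ⋙ P.push f₂ :=
  P.twoMate (P.jIso f₂ π π₁ hπ₂).hom

/-- The multiplication `μ'` of the monad `(f₂)_! ∘ f₁^*`. -/
noncomputable def mu' {BAB Q : C} (f₁ f₂ : BAB ⟶ B) (π₁ π₂ π : Q ⟶ BAB)
    (hππ : π₂ ≫ f₂ = π₁ ≫ f₁) (hπ₁ : π ≫ f₁ = π₂ ≫ f₁) (hπ₂ : π ≫ f₂ = π₁ ≫ f₂)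
    (hiso : IsIso (P.BC π₂ π₁ f₂ f₁ hππ)) (X : E B) :
    (P.push f₂).obj ((P.pull f₁).obj ((P.push f₂).obj ((P.pull f₁).obj X))) ⟶
      (P.push f₂).obj ((P.pull f₁).obj X) :=
  (P.push f₂).map ((P.BCinv π₂ π₁ f₂ f₁ hππ hiso).app ((P.pull f₁).obj X)) ≫
    (P.push f₂).map ((P.push π₁).map ((P.jIso f₁ π π₂ hπ₁).inv.app X)) ≫
    (P.kTwo f₂ π π₁ hπ₂).app ((P.pull π).obj ((P.pull f₁).obj X)) ≫
    (P.push f₂).map ((P.adj π).counit.app ((P.pull f₁).obj X))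

end ClovenBifib

end BRPaper

/-!
Precomposing both sides with the isomorphism `(f₂)_!(BC₂)` and transposing along the
adjunctions `(f₂)_! ⊣ f₂^*` and `(π₁)_! ⊣ π₁^*`, the two sides become maps
`π₂^* f₁^* X ⟶ π₁^* f₂^* X`: the right-hand side becomes `π₁^*(φ) ∘ j_X ∘ π₂^*(φ)`, because
the Beck–Chevalley map is the mate of `j`, and the left-hand side becomes
`(j₂)_X ∘ π^*(φ) ∘ (j₁⁻¹)_X`, because `k₂` is the two-fold mate of `j₂`. These agree by (DD2).
-/

namespace BRPaper.ClovenBifib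

variable {C : Type u} [Category.{v} C] {E : C → Type u'} [∀ A, Category.{v'} (E A)]
  (P : ClovenBifib C E)

section Mates

variable {A₀ B₀ C₀ D₀ : C} {e : B₀ ⟶ A₀} {g : C₀ ⟶ B₀} {k : C₀ ⟶ D₀} {h : D₀ ⟶ A₀}
  (θ : P.pull e ⋙ P.pull g ⟶ P.pull h ⋙ P.pull k)

theorem mate_app_comp_pull_map_homEquiv_symm {Y : E B₀} {X : E A₀}
    (w : Y ⟶ (P.pull e).obj X) :
    (P.mate θ).app Y ≫ (P.pull h).map (((P.adj e).homEquiv _ _).symm w) =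
      ((P.adj k).homEquiv _ _).symm ((P.pull g).map w ≫ θ.app X) := by
  simp only [mate, NatTrans.comp_app, Functor.whiskerRight_app, Functor.whiskerLeft_app,
    Functor.comp_obj, Functor.comp_map, Category.assoc, Adjunction.homEquiv_counit]
  rw [← (P.adj k).counit_naturality, ← Functor.map_comp_assoc, ← Functor.map_comp_assoc]
  congr 2
  rw [Category.assoc, ← Functor.comp_map (P.pull h), ← θ.naturality, Functor.comp_map,
    ← Functor.map_comp_assoc]
  simp

theorem twoMate_app_comp_homEquiv_symm {Z : E C₀} {X : E A₀}
    (w : (P.push g).obj Z ⟶ (P.pull e).obj X) :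
    (P.twoMate θ).app Z ≫ ((P.adj e).homEquiv _ _).symm w =
      ((P.adj h).homEquiv _ _).symm
        (((P.adj k).homEquiv _ _).symm ((P.adj g).homEquiv _ _ w ≫ θ.app X)) := by
  simp only [twoMate, NatTrans.comp_app, Functor.whiskerRight_app, Functor.whiskerLeft_app,
    Functor.comp_obj, Functor.comp_map, Category.assoc]
  rw [← (P.adj h).counit_naturality, ← Functor.map_comp_assoc, ← Functor.map_comp_assoc,
    Category.assoc, mate_app_comp_pull_map_homEquiv_symm, ← Adjunction.homEquiv_naturality_left_symm,
    Adjunction.homEquiv_unit (P.adj g), Category.assoc, Adjunction.homEquiv_counit (P.adj h)]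
  rfl

end Mates

section Descent

variable {B BAB Q : C} {f₁ f₂ : BAB ⟶ B} {π₁ π₂ π : Q ⟶ BAB} (hππ : π₂ ≫ f₂ = π₁ ≫ f₁)
  {X : E B} (φ : (P.pull f₁).obj X ⟶ (P.pull f₂).obj X)

theorem BC_eq_mate_jCross : P.BC π₂ π₁ f₂ f₁ hππ = P.mate (P.jCross f₁ f₂ π₁ π₂ hππ).hom :=
  rfl

theorem betaMap_eq_homEquiv_symm : P.betaMap f₁ f₂ X φ = ((P.adj f₂).homEquiv _ _).symm φ :=
  ((P.adj f₂).homEquiv_counit _ _ φ).symm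

theorem push_map_BC_app_comp_push_map_pull_map_betaMap_comp_betaMap :
    (P.push f₂).map ((P.BC π₂ π₁ f₂ f₁ hππ).app ((P.pull f₁).obj X)) ≫
        (P.push f₂).map ((P.pull f₁).map (P.betaMap f₁ f₂ X φ)) ≫ P.betaMap f₁ f₂ X φ =
      ((P.adj f₂).homEquiv _ _).symm (((P.adj π₁).homEquiv _ _).symm
        ((P.pull π₂).map φ ≫ (P.jCross f₁ f₂ π₁ π₂ hππ).hom.app X ≫ (P.pull π₁).map φ)) := by
  rw [betaMap_eq_homEquiv_symm, ← Functor.map_comp_assoc,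
    ← Adjunction.homEquiv_naturality_left_symm, BC_eq_mate_jCross,
    mate_app_comp_pull_map_homEquiv_symm, ← Adjunction.homEquiv_naturality_right_symm,
    Category.assoc]
  rfl

theorem push_map_BC_app_comp_mu'_comp_betaMap (hπ₁ : π ≫ f₁ = π₂ ≫ f₁)
    (hπ₂ : π ≫ f₂ = π₁ ≫ f₂) (hiso : IsIso (P.BC π₂ π₁ f₂ f₁ hππ)) :
    (P.push f₂).map ((P.BC π₂ π₁ f₂ f₁ hππ).app ((P.pull f₁).obj X)) ≫
        P.mu' f₁ f₂ π₁ π₂ π hππ hπ₁ hπ₂ hiso X ≫ P.betaMap f₁ f₂ X φ =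
      ((P.adj f₂).homEquiv _ _).symm
        (((P.adj π₁).homEquiv ((P.pull π₂).obj ((P.pull f₁).obj X)) _).symm
          ((P.jIso f₁ π π₂ hπ₁).inv.app X ≫ (P.pull π).map φ ≫
            (P.jIso f₂ π π₁ hπ₂).hom.app X)) := by
  have hε : (P.adj π).homEquiv ((P.pull π).obj ((P.pull f₁).obj X)) _
      ((P.adj π).counit.app ((P.pull f₁).obj X) ≫ φ) = (P.pull π).map φ := by
    simp [Adjunction.homEquiv_unit]
  simp only [mu', BCinv, betaMap_eq_homEquiv_symm, Category.assoc]
  rw [← Functor.map_comp_assoc, ← NatTrans.comp_app, IsIso.hom_inv_id, NatTrans.id_app,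
    CategoryTheory.Functor.map_id, Category.id_comp, ← Adjunction.homEquiv_naturality_left_symm,
    kTwo, twoMate_app_comp_homEquiv_symm, hε]
  conv_rhs => rw [Adjunction.homEquiv_naturality_left_symm (P.adj π₁),
    Adjunction.homEquiv_naturality_left_symm (P.adj f₂)]
  rfl

end Descent

end BRPaper.ClovenBifib

open BRPaper ClovenBifib CategoryTheory

theorem benabou_roubaud_beta_AC2_general
    {C : Type u} [Category.{v} C]
    {E : C → Type u'} [∀ A, Category.{v'} (E A)] (P : ClovenBifib C E)
    (hBC : P.BCCond)
    {A B : C} {BAB : C} (f₁ f₂ : BAB ⟶ B)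
    {Q : C} (π₁ π₂ : Q ⟶ BAB) (hππ : π₂ ≫ f₂ = π₁ ≫ f₁) (hpbQ : IsPullback π₂ π₁ f₂ f₁)
    (π : Q ⟶ BAB) (hπ₁ : π ≫ f₁ = π₂ ≫ f₁) (hπ₂ : π ≫ f₂ = π₁ ≫ f₂)
    (X : E B) (φ : (P.pull f₁).obj X ≅ (P.pull f₂).obj X)
    (hDD2 : (P.pull π₂).map φ.hom ≫ (P.jCross f₁ f₂ π₁ π₂ hππ).hom.app X ≫
        (P.pull π₁).map φ.hom =
      (P.jIso f₁ π π₂ hπ₁).inv.app X ≫ (P.pull π).map φ.hom ≫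
        (P.jIso f₂ π π₁ hπ₂).hom.app X) :
    P.mu' f₁ f₂ π₁ π₂ π hππ hπ₁ hπ₂ (hBC π₂ π₁ f₂ f₁ hππ hpbQ) X ≫
        P.betaMap f₁ f₂ X φ.hom =
      (P.push f₂).map ((P.pull f₁).map (P.betaMap f₁ f₂ X φ.hom)) ≫
        P.betaMap f₁ f₂ X φ.hom := by
  have := hBC π₂ π₁ f₂ f₁ hππ hpbQ
  rw [← cancel_epi ((P.push f₂).map ((P.BC π₂ π₁ f₂ f₁ hππ).app ((P.pull f₁).obj X))),
    push_map_BC_app_comp_mu'_comp_betaMap,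
    push_map_BC_app_comp_push_map_pull_map_betaMap_comp_betaMap, hDD2]

/-- Assume the Beck–Chevalley property. If `(X, φ)` is an object
of `Desc_p(f)`, then `β := (ε_{f₂})_X ∘ (f₂)_!(φ)` satisfies the multiplicative
action axiom (AC2): `β ∘ μ'_X = β ∘ (f₂)_!(f₁^*(β))`. -/
theorem benabou_roubaud_beta_AC2
    {C : Type u} [Category.{v} C] [Limits.HasPullbacks C]
    {E : C → Type u'} [∀ A, Category.{v'} (E A)] (P : ClovenBifib C E)
    (hBC : P.BCCond)
    {A B : C} (f : B ⟶ A) {BAB : C} (f₁ f₂ : BAB ⟶ B)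
    (hf : f₁ ≫ f = f₂ ≫ f) (hkp : IsPullback f₁ f₂ f f)
    (Δ : B ⟶ BAB) (hΔ₁ : Δ ≫ f₁ = 𝟙 B) (hΔ₂ : Δ ≫ f₂ = 𝟙 B)
    {Q : C} (π₁ π₂ : Q ⟶ BAB) (hππ : π₂ ≫ f₂ = π₁ ≫ f₁) (hpbQ : IsPullback π₂ π₁ f₂ f₁)
    (π : Q ⟶ BAB) (hπ₁ : π ≫ f₁ = π₂ ≫ f₁) (hπ₂ : π ≫ f₂ = π₁ ≫ f₂)
    (X : E B) (φ : (P.pull f₁).obj X ≅ (P.pull f₂).obj X)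
    (hDD1 : (P.dIso f₁ Δ hΔ₁).hom.app X ≫ (P.pull Δ).map φ.hom =
      (P.dIso f₂ Δ hΔ₂).hom.app X)
    (hDD2 : (P.pull π₂).map φ.hom ≫ (P.jCross f₁ f₂ π₁ π₂ hππ).hom.app X ≫
        (P.pull π₁).map φ.hom =
      (P.jIso f₁ π π₂ hπ₁).inv.app X ≫ (P.pull π).map φ.hom ≫
        (P.jIso f₂ π π₁ hπ₂).hom.app X) :
    P.mu' f₁ f₂ π₁ π₂ π hππ hπ₁ hπ₂ (hBC π₂ π₁ f₂ f₁ hππ hpbQ) X ≫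
        P.betaMap f₁ f₂ X φ.hom =
      (P.push f₂).map ((P.pull f₁).map (P.betaMap f₁ f₂ X φ.hom)) ≫
        P.betaMap f₁ f₂ X φ.hom :=
  benabou_roubaud_beta_AC2_general P hBC (A := A) f₁ f₂ π₁ π₂ hππ hpbQ π hπ₁ hπ₂ X φ hDD2
end

section
/- (Round trip on actions) Assume the Beck–Chevalley property. Let (X, β) be an action of Eq(f) on p, let α := β ∘ (BC₁⁻¹)_X : f^*(f_! X) ⟶ X and let φ := f₂^*(α) ∘ (χ₁)_{f_! X} ∘ f₁^*((η_f)_X) : f₁^* X ⟶ f₂^* X. Then (ε_{f₂})_X ∘ (f₂)_!(φ) = β. -/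
open CategoryTheory

universe v' u' v u

/-!
`BC₁` is by definition the mate of `χ₁`, so `(ε_{f₂})_X ∘ (f₂)_!(φ)`, the adjoint transpose of
`φ = f₂^*(α) ∘ χ₁ ∘ f₁^*(η_f)`, equals `α ∘ (BC₁)_X`. With `α = β ∘ (BC₁⁻¹)_X` this is `β`.
-/

namespace BRPaper.ClovenBifib

variable {C : Type u} [Category.{v} C] {E : C → Type u'} [∀ A, Category.{v'} (E A)]
  (P : ClovenBifib C E)

lemma mate_app_comp {A₀ B₀ C₀ D₀ : C} {e : B₀ ⟶ A₀} {g : C₀ ⟶ B₀} {k : C₀ ⟶ D₀}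
    {h : D₀ ⟶ A₀} (θ : P.pull e ⋙ P.pull g ⟶ P.pull h ⋙ P.pull k) (Y : E B₀) {Z : E D₀}
    (α : (P.pull h).obj ((P.push e).obj Y) ⟶ Z) :
    (P.mate θ).app Y ≫ α =
      (P.push k).map ((P.pull g).map ((P.adj e).unit.app Y) ≫ θ.app ((P.push e).obj Y) ≫
        (P.pull k).map α) ≫ (P.adj k).counit.app Z := by
  simp only [mate, NatTrans.comp_app, Functor.whiskerRight_app, Functor.whiskerLeft_app,
    Functor.comp_map, Functor.comp_obj, Functor.map_comp, Category.assoc]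
  erw [(P.adj k).counit_naturality]

lemma BC_app_BCinv_app {A₀ B₀ C₀ D₀ : C} (a : A₀ ⟶ B₀) (c : A₀ ⟶ C₀) (d : B₀ ⟶ D₀)
    (b : C₀ ⟶ D₀) (sq : a ≫ d = c ≫ b) (hiso : IsIso (P.BC a c d b sq)) (X : E B₀) :
    (P.BC a c d b sq).app X ≫ (P.BCinv a c d b sq hiso).app X = 𝟙 _ := by
  rw [BCinv, ← NatTrans.comp_app, IsIso.hom_inv_id, NatTrans.id_app]

lemma betaMap_phi {A B : C} (f : B ⟶ A) {BAB : C} (f₁ f₂ : BAB ⟶ B) (hf : f₁ ≫ f = f₂ ≫ f)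
    (X : E B) (α : (P.pull f).obj ((P.push f).obj X) ⟶ X) :
    P.betaMap f₁ f₂ X (P.phi f f₁ f₂ hf X α) = (P.BC f₁ f₂ f f hf).app X ≫ α :=
  (P.mate_app_comp (P.chi1 f f₁ f₂ hf).hom X α).symm

end BRPaper.ClovenBifib

open BRPaper ClovenBifib CategoryTheory

theorem benabou_roubaud_round_trip_actions_general
    {C : Type u} [Category.{v} C]
    {E : C → Type u'} [∀ A, Category.{v'} (E A)] (P : ClovenBifib C E)
    (hBC : P.BCCond)
    {A B : C} (f : B ⟶ A) {BAB : C} (f₁ f₂ : BAB ⟶ B)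
    (hf : f₁ ≫ f = f₂ ≫ f) (hkp : IsPullback f₁ f₂ f f)
    (X : E B) (β : (P.push f₂).obj ((P.pull f₁).obj X) ⟶ X) :
    P.betaMap f₁ f₂ X
        (P.phi f f₁ f₂ hf X
          ((P.BCinv f₁ f₂ f f hf (hBC f₁ f₂ f f hf hkp)).app X ≫ β)) = β := by
  rw [betaMap_phi, ← Category.assoc, BC_app_BCinv_app, Category.id_comp]

/-- **round trip on actions.** Assume the Beck–Chevalley property.
For an action `(X, β)` of `Eq(f)` on `p`, with `α := β ∘ (BC₁⁻¹)_X` and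
`φ := f₂^*(α) ∘ (χ₁)_{f_! X} ∘ f₁^*((η_f)_X)`, we have
`(ε_{f₂})_X ∘ (f₂)_!(φ) = β`. -/
theorem benabou_roubaud_round_trip_actions
    {C : Type u} [Category.{v} C] [Limits.HasPullbacks C]
    {E : C → Type u'} [∀ A, Category.{v'} (E A)] (P : ClovenBifib C E)
    (hBC : P.BCCond)
    {A B : C} (f : B ⟶ A) {BAB : C} (f₁ f₂ : BAB ⟶ B)
    (hf : f₁ ≫ f = f₂ ≫ f) (hkp : IsPullback f₁ f₂ f f)
    (Δ : B ⟶ BAB) (hΔ₁ : Δ ≫ f₁ = 𝟙 B) (hΔ₂ : Δ ≫ f₂ = 𝟙 B)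
    {Q : C} (π₁ π₂ : Q ⟶ BAB) (hππ : π₂ ≫ f₂ = π₁ ≫ f₁) (hpbQ : IsPullback π₂ π₁ f₂ f₁)
    (π : Q ⟶ BAB) (hπ₁ : π ≫ f₁ = π₂ ≫ f₁) (hπ₂ : π ≫ f₂ = π₁ ≫ f₂)
    (X : E B) (β : (P.push f₂).obj ((P.pull f₁).obj X) ⟶ X)
    (hAC1 : P.eta' f₁ f₂ Δ hΔ₁ hΔ₂ X ≫ β = 𝟙 X)
    (hAC2 : P.mu' f₁ f₂ π₁ π₂ π hππ hπ₁ hπ₂ (hBC π₂ π₁ f₂ f₁ hππ hpbQ) X ≫ β =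
      (P.push f₂).map ((P.pull f₁).map β) ≫ β) :
    P.betaMap f₁ f₂ X
        (P.phi f f₁ f₂ hf X
          ((P.BCinv f₁ f₂ f f hf (hBC f₁ f₂ f f hf hkp)).app X ≫ β)) = β :=
  benabou_roubaud_round_trip_actions_general P hBC f f₁ f₂ hf hkp X β
end
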